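/- arXiv:1202.2690 — 3 statements merged into one kernel-verified Lean document; each statement's English description precedes it below -/
import Mathlib

section
/- A 2-dimensional evolution algebra over ℝ with structural constants matrix A = (a_{ij}) is baric if and only if (a_{11} ≠ 0 and a_{21} = 0) or (a_{22} ≠ 0 and a_{12} = 0). -/
/-! A linear functional `σ` is multiplicative exactly when `σ e₁ · σ e₂ = 0` and
`σ (eᵢ eᵢ) = (σ eᵢ)²`. If `σ ≠ 0`, exactly one of `σ e₁`, `σ e₂` is nonzero, say `σ e₁`; then
`a₁₁ σ e₁ = (σ e₁)²` and `a₂₁ σ e₁ = 0` force `a₁₁ = σ e₁ ≠ 0` and `a₂₁ = 0`. Conversely,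
`x ↦ a₁₁ x₁` (resp. `x ↦ a₂₂ x₂`) is then a character. -/

/-- Multiplication of the 2-dimensional evolution algebra with structural
constants matrix `A`: `e_i e_i = Σ_j A i j • e_j`, `e_i e_j = 0` for `i ≠ j`,
extended bilinearly. -/
def evMul2 (A : Matrix (Fin 2) (Fin 2) ℝ) (x y : Fin 2 → ℝ) : Fin 2 → ℝ :=
  ![A 0 0 * (x 0 * y 0) + A 1 0 * (x 1 * y 1),
    A 0 1 * (x 0 * y 0) + A 1 1 * (x 1 * y 1)]

open LinearMap

theorem LinearMap.apply_fin_two {R : Type*} [CommSemiring R] (σ : (Fin 2 → R) →ₗ[R] R)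
    (x : Fin 2 → R) : σ x = x 0 * σ (Pi.single 0 1) + x 1 * σ (Pi.single 1 1) := by
  rw [← (LinearEquiv.piRing R R (Fin 2) R).symm_apply_apply σ, LinearEquiv.piRing_symm_apply,
    Fin.sum_univ_two]
  simp [LinearEquiv.piRing_apply]

theorem LinearMap.apply_single_ne_zero_or_of_ne_zero {R : Type*} [CommSemiring R]
    {σ : (Fin 2 → R) →ₗ[R] R} (hσ : σ ≠ 0) : σ (Pi.single 0 1) ≠ 0 ∨ σ (Pi.single 1 1) ≠ 0 := by
  contrapose! hσ
  ext i
  fin_cases i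
  exacts [hσ.1, hσ.2]

theorem map_evMul2_eq_mul_iff (A : Matrix (Fin 2) (Fin 2) ℝ) (σ : (Fin 2 → ℝ) →ₗ[ℝ] ℝ) :
    (∀ x y : Fin 2 → ℝ, σ (evMul2 A x y) = σ x * σ y) ↔
      σ (Pi.single 0 1) * σ (Pi.single 1 1) = 0 ∧
      A 0 0 * σ (Pi.single 0 1) + A 0 1 * σ (Pi.single 1 1) = σ (Pi.single 0 1) ^ 2 ∧
      A 1 0 * σ (Pi.single 0 1) + A 1 1 * σ (Pi.single 1 1) = σ (Pi.single 1 1) ^ 2 := by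
  set s := σ (Pi.single 0 1)
  set t := σ (Pi.single 1 1)
  have hσ (x : Fin 2 → ℝ) : σ x = x 0 * s + x 1 * t := σ.apply_fin_two x
  clear_value s t
  simp only [hσ, evMul2, Matrix.cons_val_zero, Matrix.cons_val_one]
  constructor
  · intro h
    have h00 := h (Pi.single 0 1) (Pi.single 0 1)
    have h01 := h (Pi.single 0 1) (Pi.single 1 1)
    have h11 := h (Pi.single 1 1) (Pi.single 1 1)
    simp only [Pi.single_eq_same, Pi.single_eq_of_ne, ne_eq, zero_ne_one, one_ne_zero,
      not_false_eq_true] at h00 h01 h11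
    exact ⟨by linear_combination -h01, by linear_combination h00, by linear_combination h11⟩
  · rintro ⟨h01, h0, h1⟩ x y
    linear_combination (x 0 * y 0) * h0 + (x 1 * y 1) * h1 - (x 0 * y 1 + x 1 * y 0) * h01

theorem eq_and_eq_zero_of_character_equations {s t a b a' b' : ℝ} (hs : s ≠ 0)
    (hst : s * t = 0) (h : a * s + b * t = s ^ 2) (h' : a' * s + b' * t = t ^ 2) :
    a = s ∧ a' = 0 := by
  obtain rfl : t = 0 := (mul_eq_zero.1 hst).resolve_left hs
  exact ⟨mul_right_cancel₀ hs (by linear_combination h),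
    (mul_eq_zero.1 (by linear_combination h')).resolve_right hs⟩

theorem stmt_4 (A : Matrix (Fin 2) (Fin 2) ℝ) :
    (∃ σ : (Fin 2 → ℝ) →ₗ[ℝ] ℝ, σ ≠ 0 ∧
      ∀ x y : Fin 2 → ℝ, σ (evMul2 A x y) = σ x * σ y) ↔
    ((A 0 0 ≠ 0 ∧ A 1 0 = 0) ∨ (A 1 1 ≠ 0 ∧ A 0 1 = 0)) := by
  constructor
  · rintro ⟨σ, hσ, hmul⟩
    obtain ⟨hst, h0, h1⟩ := (map_evMul2_eq_mul_iff A σ).1 hmul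
    rcases apply_single_ne_zero_or_of_ne_zero hσ with hs | ht
    · obtain ⟨hA, hA'⟩ := eq_and_eq_zero_of_character_equations hs hst h0 h1
      exact .inl ⟨hA ▸ hs, hA'⟩
    · obtain ⟨hA, hA'⟩ := eq_and_eq_zero_of_character_equations (a := A 1 1) (b := A 1 0)
        (a' := A 0 1) (b' := A 0 0) ht (by rwa [mul_comm]) (by linear_combination h1)
        (by linear_combination h0)
      exact .inr ⟨hA ▸ ht, hA'⟩
  · rintro (⟨hA, hA'⟩ | ⟨hA, hA'⟩)
    · refine ⟨A 0 0 • proj 0, fun h ↦ hA ?_, (map_evMul2_eq_mul_iff A _).2 ?_⟩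
      · simpa using LinearMap.congr_fun h (Pi.single 0 1)
      · simp [hA', sq]
    · refine ⟨A 1 1 • proj 1, fun h ↦ hA ?_, (map_evMul2_eq_mul_iff A _).2 ?_⟩
      · simpa using LinearMap.congr_fun h (Pi.single 1 1)
      · simp [hA', sq]
end

section
/- If an n-dimensional evolution algebra E over ℝ has a column index i₀ of its structural constants matrix A = (a_{ij}) with a_{i₀i₀} ≠ 0 and a_{i i₀} = 0 for all i ≠ i₀, then the linear map σ(x) = a_{i₀i₀} x_{i₀} is a character of E, i.e., σ is nonzero and σ(xy) = σ(x)σ(y) for all x, y ∈ E. -/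
/-- Multiplication of the n-dimensional evolution algebra with structural
constants matrix `A`. -/
def evMuln (n : ℕ) (A : Matrix (Fin n) (Fin n) ℝ) (x y : Fin n → ℝ) : Fin n → ℝ :=
  fun j => ∑ i, A i j * (x i * y i)

theorem evMuln_apply_of_col_eq_single {n : ℕ} {A : Matrix (Fin n) (Fin n) ℝ} {j : Fin n}
    (hA : ∀ i, i ≠ j → A i j = 0) (x y : Fin n → ℝ) :
    evMuln n A x y j = A j j * (x j * y j) :=
  Fintype.sum_eq_single j fun i hi => by rw [hA i hi, zero_mul]

theorem stmt_5 (n : ℕ) (A : Matrix (Fin n) (Fin n) ℝ) (i₀ : Fin n)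
    (h1 : A i₀ i₀ ≠ 0) (h2 : ∀ i : Fin n, i ≠ i₀ → A i i₀ = 0) :
    (fun x : Fin n → ℝ => A i₀ i₀ * x i₀) ≠ 0 ∧
    ∀ x y : Fin n → ℝ,
      A i₀ i₀ * (evMuln n A x y) i₀ = (A i₀ i₀ * x i₀) * (A i₀ i₀ * y i₀) := by
  refine ⟨fun hσ => h1 ?_, fun x y => ?_⟩
  · simpa using congrFun hσ 1
  · rw [evMuln_apply_of_col_eq_single h2]
    ring
end

section
/- Let p, q be nonzero reals with p ≠ q, and consider the evolution algebra with matrix (1/2)[[p+q, p−q],[p−q, p+q]]. If x = (x₁, x₂) is an idempotent with x₁ x₂ ≠ 0 and x₁ ≠ x₂, then u = x₁/x₂ satisfies (p−q)u² − 2qu + (p−q) = 0; in particular such an idempotent with x₁ ≠ x₂ exists only if the discriminant D = p(2q − p) ≥ 0. -/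
/-! Adding the two idempotent equations gives `x₁ + x₂ = p (x₁² + x₂²)`; subtracting them gives
`x₁ - x₂ = q (x₁² - x₂²)`, hence `q (x₁ + x₂) = 1` once `x₁ ≠ x₂`. Eliminating `x₁ + x₂` between the
two leaves the homogeneous quadratic `(p - q) x₁² - 2q x₁x₂ + (p - q) x₂² = 0`, i.e. a quadratic
in `u = x₁ / x₂`, whose discriminant `4q² - 4(p - q)² = 4p(2q - p)` is a square. -/

/-- `(x₁, x₂)` is an idempotent of the evolution algebra with structure matrix
`(1/2) [[p + q, p - q], [p - q, p + q]]`. -/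
def IsSymmEvolIdempotent {K : Type*} [Field K] (p q x₁ x₂ : K) : Prop :=
  x₁ = (p + q) / 2 * x₁ ^ 2 + (p - q) / 2 * x₂ ^ 2 ∧
    x₂ = (p - q) / 2 * x₁ ^ 2 + (p + q) / 2 * x₂ ^ 2

namespace IsSymmEvolIdempotent

variable {K : Type*} [Field K] [NeZero (2 : K)] {p q x₁ x₂ : K}

theorem add_eq (hx : IsSymmEvolIdempotent p q x₁ x₂) : x₁ + x₂ = p * (x₁ ^ 2 + x₂ ^ 2) := by
  linear_combination (norm := (field_simp; ring)) hx.1 + hx.2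

theorem mul_add_eq_one (hx : IsSymmEvolIdempotent p q x₁ x₂) (hne : x₁ ≠ x₂) :
    q * (x₁ + x₂) = 1 := by
  have hsub : (x₁ - x₂) * (q * (x₁ + x₂)) = (x₁ - x₂) * 1 := by
    linear_combination (norm := (field_simp; ring)) hx.2 - hx.1
  exact mul_left_cancel₀ (sub_ne_zero.mpr hne) hsub

theorem homogeneous_quadratic (hx : IsSymmEvolIdempotent p q x₁ x₂) (hne : x₁ ≠ x₂) :
    (p - q) * x₁ ^ 2 - 2 * q * (x₁ * x₂) + (p - q) * x₂ ^ 2 = 0 := by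
  linear_combination -hx.add_eq - (x₁ + x₂) * hx.mul_add_eq_one hne

theorem ratio_quadratic (hx : IsSymmEvolIdempotent p q x₁ x₂) (hx₂ : x₂ ≠ 0) (hne : x₁ ≠ x₂) :
    (p - q) * (x₁ / x₂) ^ 2 - 2 * q * (x₁ / x₂) + (p - q) = 0 := by
  field_simp
  linear_combination hx.homogeneous_quadratic hne

end IsSymmEvolIdempotent

theorem discrim_nonneg_of_quadratic_eq_zero {R : Type*} [CommRing R] [LinearOrder R]
    [IsStrictOrderedRing R] {a b c x : R} (h : a * (x * x) + b * x + c = 0) :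
    0 ≤ discrim a b c :=
  discrim_eq_sq_of_quadratic_eq_zero h ▸ sq_nonneg _

theorem stmt_15_general (p q : ℝ)
    (x₁ x₂ : ℝ)
    (hid1 : x₁ = (p + q) / 2 * x₁ ^ 2 + (p - q) / 2 * x₂ ^ 2)
    (hid2 : x₂ = (p - q) / 2 * x₁ ^ 2 + (p + q) / 2 * x₂ ^ 2)
    (hxy : x₁ * x₂ ≠ 0) (hne : x₁ ≠ x₂) :
    (p - q) * (x₁ / x₂) ^ 2 - 2 * q * (x₁ / x₂) + (p - q) = 0 ∧
    0 ≤ p * (2 * q - p) := by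
  have hu := IsSymmEvolIdempotent.ratio_quadratic ⟨hid1, hid2⟩ (right_ne_zero_of_mul hxy) hne
  refine ⟨hu, ?_⟩
  have hD : 0 ≤ discrim (p - q) (-2 * q) (p - q) :=
    discrim_nonneg_of_quadratic_eq_zero (x := x₁ / x₂) (by linear_combination hu)
  have hD_eq : discrim (p - q) (-2 * q) (p - q) = 4 * (p * (2 * q - p)) := by
    rw [discrim]; ring
  linarith

theorem stmt_15 (p q : ℝ) (hp : p ≠ 0) (hq : q ≠ 0) (hpq : p ≠ q)
    (x₁ x₂ : ℝ)
    (hid1 : x₁ = (p + q) / 2 * x₁ ^ 2 + (p - q) / 2 * x₂ ^ 2)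
    (hid2 : x₂ = (p - q) / 2 * x₁ ^ 2 + (p + q) / 2 * x₂ ^ 2)
    (hxy : x₁ * x₂ ≠ 0) (hne : x₁ ≠ x₂) :
    (p - q) * (x₁ / x₂) ^ 2 - 2 * q * (x₁ / x₂) + (p - q) = 0 ∧
    0 ≤ p * (2 * q - p) :=
  stmt_15_general p q x₁ x₂ hid1 hid2 hxy hne
end
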